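/- arXiv:math/0010238 — 2 statements merged into one kernel-verified Lean document; each statement's English description precedes it below -/
import Mathlib

section
/- For each n ≥ 2 there exist partitions Δ_n and ∇_n of σ_n = {2^n, ..., 2^{n+1}-1} and numbers m_n ≥ 2^{n/8 - 2} such that: (1) every A ∈ ∇_n satisfies m_n ≤ card(A) ≤ 2 m_n; (2) for every A ∈ ∇_n and B ∈ Δ_n, card(A ∩ B) ≤ 1; (3) for every A ∈ ∇_n and every k with 1 ≤ k ≤ 9, the image f_k(A) is contained in a single element of Δ_{n-1}, Δ_n, or Δ_{n+1}. -/
/-- σ_n = {2^n, ..., 2^{n+1}-1} as a finite set. -/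
def sigmaF (n : ℕ) : Finset ℕ := Finset.Ico (2 ^ n) (2 ^ (n + 1))

/-- Szankowski's index functions f_1, ..., f_9. -/
def f (k j : ℕ) : ℕ :=
  let i := j / 4
  let l := j % 4
  match k with
  | 1 => 2 * i
  | 2 => 2 * i + 1
  | 3 => 4 * i + (l + 1) % 4
  | 4 => 4 * i + (l + 2) % 4
  | 5 => 4 * i + (l + 3) % 4
  | 6 => if l ≤ 1 then 8 * i else 8 * i + 4
  | 7 => if l ≤ 1 then 8 * i + 1 else 8 * i + 5
  | 8 => if l ≤ 1 then 8 * i + 2 else 8 * i + 6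
  | _ => if l ≤ 1 then 8 * i + 3 else 8 * i + 7

/-- P is a partition of S into (nonempty) pairwise disjoint sets covering S. -/
def IsPartitionOf (P : Finset (Finset ℕ)) (S : Finset ℕ) : Prop :=
  (∀ A ∈ P, A.Nonempty) ∧ (∀ A ∈ P, ∀ B ∈ P, A ≠ B → Disjoint A B) ∧ P.biUnion id = S

/-!
Read `j ∈ σ_n` in binary. The two lowest bits `l = j % 4` select one of four windows of
`width n` consecutive bit positions; `∇_n` groups the numbers with the same `l` that agree
outside their window, and `Δ_n` groups those with the same `l` and the same bits inside it. So a
`∇_n`-block has `2 ^ width n` elements and meets each `Δ_n`-block at most once.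
Every `f_k` has the form `j ↦ 2 ^ e * (j / 4) + c (j % 4)` with `e ∈ {1, 2, 3}`: it maps `σ_n` to
`σ_{n+e-2}` and moves the bits of `j` above bit 1 by `e - 2` places. The windows are placed so
that, after this shift, the window of a `∇_n`-block misses every window read by `Δ_{n+e-2}`
(for `e = 2` this uses `f_k j % 4 ≠ j % 4`), so `f_k` maps each `∇_n`-block into one
`Δ_{n+e-2}`-block.
-/

namespace Szankowski

section Fibres

variable {β γ : Type*} [DecidableEq β] [DecidableEq γ]

def fibres (S : Finset ℕ) (g : ℕ → β) : Finset (Finset ℕ) :=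
  S.image fun a => S.filter fun j => g j = g a

lemma isPartitionOf_fibres (S : Finset ℕ) (g : ℕ → β) : IsPartitionOf (fibres S g) S := by
  simp only [IsPartitionOf, fibres, Finset.forall_mem_image]
  refine ⟨fun a ha => ⟨a, Finset.mem_filter.2 ⟨ha, rfl⟩⟩, fun a _ b _ hne => ?_, ?_⟩
  · rw [Finset.disjoint_left]
    intro x hxa hxb
    simp only [Finset.mem_filter] at hxa hxb
    exact hne (by rw [← hxa.2, hxb.2])
  · ext x
    simp only [Finset.mem_biUnion, Finset.mem_image, id, exists_exists_and_eq_and,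
      Finset.mem_filter]
    exact ⟨fun ⟨_, _, hx, _⟩ => hx, fun hx => ⟨x, hx, hx, rfl⟩⟩

lemma card_inter_le_one_of_mem_fibres {S : Finset ℕ} {g : ℕ → β} {h : ℕ → γ}
    (hinj : ∀ x ∈ S, ∀ y ∈ S, g x = g y → h x = h y → x = y) {A B : Finset ℕ}
    (hA : A ∈ fibres S g) (hB : B ∈ fibres S h) : (A ∩ B).card ≤ 1 := by
  obtain ⟨a, -, rfl⟩ := Finset.mem_image.1 hA
  obtain ⟨b, -, rfl⟩ := Finset.mem_image.1 hB
  refine Finset.card_le_one.2 fun x hx y hy => ?_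
  simp only [Finset.mem_inter, Finset.mem_filter] at hx hy
  exact hinj x hx.1.1 y hy.1.1 (hx.1.2.trans hy.1.2.symm) (hx.2.2.trans hy.2.2.symm)

lemma exists_image_subset_of_mem_fibres {S T : Finset ℕ} {g : ℕ → β} {h : ℕ → γ} {φ : ℕ → ℕ}
    (hφ : ∀ x ∈ S, φ x ∈ T) (hgh : ∀ x ∈ S, ∀ y ∈ S, g x = g y → h (φ x) = h (φ y))
    {A : Finset ℕ} (hA : A ∈ fibres S g) : ∃ B ∈ fibres T h, A.image φ ⊆ B := by
  obtain ⟨a, ha, rfl⟩ := Finset.mem_image.1 hA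
  refine ⟨_, Finset.mem_image_of_mem _ (hφ a ha), fun y hy => ?_⟩
  obtain ⟨x, hx, rfl⟩ := Finset.mem_image.1 hy
  rw [Finset.mem_filter] at hx ⊢
  exact ⟨hφ x hx.1, hgh x hx.1 a ha hx.2⟩

end Fibres

section BitField

def field (q v x : ℕ) : ℕ := x / 2 ^ q % 2 ^ v

def setField (q v x w : ℕ) : ℕ := x % 2 ^ q + 2 ^ q * (w + 2 ^ v * (x / 2 ^ (q + v)))

variable {q v x y w : ℕ}

lemma setField_field (q v x : ℕ) : setField q v x (field q v x) = x := by
  rw [setField, field, pow_add, ← Nat.div_div_eq_div_mul, Nat.mod_add_div, Nat.mod_add_div]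

lemma setField_congr (hmod : x % 2 ^ q = y % 2 ^ q) (hdiv : x / 2 ^ (q + v) = y / 2 ^ (q + v))
    (w : ℕ) : setField q v x w = setField q v y w := by
  rw [setField, setField, hmod, hdiv]

lemma setField_mod_two_pow (w : ℕ) : setField q v x w % 2 ^ q = x % 2 ^ q := by
  rw [setField, Nat.add_mul_mod_self_left, Nat.mod_mod]

lemma setField_div_two_pow (w : ℕ) : setField q v x w / 2 ^ q = w + 2 ^ v * (x / 2 ^ (q + v)) := by
  rw [setField, Nat.add_mul_div_left _ _ (by positivity),
    Nat.div_eq_of_lt (Nat.mod_lt _ (by positivity)), zero_add]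

lemma field_setField (hw : w < 2 ^ v) : field q v (setField q v x w) = w := by
  rw [field, setField_div_two_pow, Nat.add_mul_mod_self_left, Nat.mod_eq_of_lt hw]

lemma setField_div_two_pow_add (hw : w < 2 ^ v) :
    setField q v x w / 2 ^ (q + v) = x / 2 ^ (q + v) := by
  rw [pow_add, ← Nat.div_div_eq_div_mul, setField_div_two_pow,
    Nat.add_mul_div_left _ _ (by positivity), Nat.div_eq_of_lt hw, zero_add, ← pow_add]

lemma field_congr (h : ∀ i ∈ Finset.Ico q (q + v), x.testBit i = y.testBit i) :
    field q v x = field q v y := by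
  refine Nat.eq_of_testBit_eq fun i => ?_
  simp only [field, Nat.testBit_mod_two_pow, Nat.testBit_div_two_pow]
  by_cases hi : i < v
  · rw [h (i + q) (Finset.mem_Ico.2 ⟨by omega, by omega⟩)]
  · simp [hi]

lemma testBit_eq_of_mod_eq_of_div_eq {p : ℕ} (hmod : x % 2 ^ q = y % 2 ^ q)
    (hdiv : x / 2 ^ p = y / 2 ^ p) {i : ℕ} (hi : i < q ∨ p ≤ i) : x.testBit i = y.testBit i := by
  rcases hi with hi | hi
  · simpa [hi] using congrArg (·.testBit i) hmod
  · simpa [Nat.testBit_div_two_pow, Nat.sub_add_cancel hi] using congrArg (·.testBit (i - p)) hdiv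

lemma mod_two_pow_eq_of_testBit_eq (h : ∀ i < q, x.testBit i = y.testBit i) :
    x % 2 ^ q = y % 2 ^ q := by
  refine Nat.eq_of_testBit_eq fun i => ?_
  by_cases hi : i < q <;> simp [hi, h]

lemma testBit_two_pow_mul_add_of_le {a c i : ℕ} (hc : c < 2 ^ a) (hi : a ≤ i) :
    (2 ^ a * x + c).testBit i = x.testBit (i - a) := by
  rw [Nat.testBit_two_pow_mul_add _ hc, if_neg (by omega)]

end BitField

section SigmaF

variable {n x y : ℕ}

lemma mem_sigmaF_iff : x ∈ sigmaF n ↔ x / 2 ^ n = 1 := by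
  have hpos := Nat.two_pow_pos n
  rw [sigmaF, Finset.mem_Ico, Nat.div_eq_iff hpos, pow_succ, one_mul]
  omega

lemma mem_sigmaF_of_div_eq {p : ℕ} (hp : p ≤ n) (h : x / 2 ^ p = y / 2 ^ p)
    (hy : y ∈ sigmaF n) : x ∈ sigmaF n := by
  have hsplit (z : ℕ) : z / 2 ^ n = z / 2 ^ p / 2 ^ (n - p) := by
    rw [Nat.div_div_eq_div_mul, ← pow_add, Nat.add_sub_cancel' hp]
  rw [mem_sigmaF_iff, hsplit] at hy ⊢
  rwa [h]

lemma div_four_mem_sigmaF (hx : x ∈ sigmaF (n + 2)) : x / 4 ∈ sigmaF n := by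
  rw [mem_sigmaF_iff] at hx ⊢
  rwa [Nat.div_div_eq_div_mul, show 4 * 2 ^ n = 2 ^ (n + 2) by ring]

lemma two_pow_mul_add_mem_sigmaF {a c : ℕ} (hc : c < 2 ^ a) (hx : x ∈ sigmaF n) :
    2 ^ a * x + c ∈ sigmaF (n + a) := by
  rw [mem_sigmaF_iff] at hx ⊢
  rwa [add_comm n a, pow_add, ← Nat.div_div_eq_div_mul, Nat.mul_add_div (by positivity),
    Nat.div_eq_of_lt hc, add_zero]

end SigmaF

section Functions

def fExp (k : ℕ) : ℕ := if k ≤ 2 then 1 else if k ≤ 5 then 2 else 3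

variable {k : ℕ}

lemma f_eq_two_pow_mul_add (hk : 1 ≤ k) (j : ℕ) : f k j = 2 ^ fExp k * (j / 4) + f k (j % 4) := by
  unfold fExp f
  split <;> simp only [imp_false] at * <;> split_ifs <;> omega

lemma f_apply_mod_four_lt (hk : 1 ≤ k) (j : ℕ) : f k (j % 4) < 2 ^ fExp k := by
  unfold fExp f
  split <;> simp only [imp_false] at * <;> split_ifs <;> omega

lemma f_mod_four_eq (k j : ℕ) : f k j % 4 = f k (j % 8) % 4 := by
  unfold f
  split <;> dsimp only <;> (try split_ifs) <;> omega

lemma f_mod_four_ne (hk : fExp k = 2) (j : ℕ) : f k j % 4 ≠ j % 4 := by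
  unfold fExp at hk
  unfold f
  split <;> simp only [imp_false] at * <;> split_ifs at hk ⊢ <;> omega

lemma testBit_f (hk : 1 ≤ k) (j : ℕ) {i : ℕ} (hi : fExp k ≤ i) :
    (f k j).testBit i = j.testBit (i + 2 - fExp k) := by
  rw [f_eq_two_pow_mul_add hk, testBit_two_pow_mul_add_of_le (f_apply_mod_four_lt hk j) hi,
    show j / 4 = j / 2 ^ 2 by norm_num, Nat.testBit_div_two_pow]
  congr 1
  omega

lemma f_mem_sigmaF {n j : ℕ} (hn : 2 ≤ n) (hk : 1 ≤ k) (hj : j ∈ sigmaF n) :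
    f k j ∈ sigmaF (n + fExp k - 2) := by
  obtain ⟨m, rfl⟩ : ∃ m, n = m + 2 := ⟨n - 2, by omega⟩
  rw [f_eq_two_pow_mul_add hk, show m + 2 + fExp k - 2 = m + fExp k by omega]
  exact two_pow_mul_add_mem_sigmaF (f_apply_mod_four_lt hk j) (div_four_mem_sigmaF hj)

end Functions

section Layout

def width (n : ℕ) : ℕ := n / 8 - 1

-- Even levels put their windows at the top of `σ_n`, odd levels just above bit 2, so that the
-- windows of consecutive levels stay disjoint after a shift by one bit.
def blockStart (n : ℕ) : ℕ := if n % 2 = 0 then n - 4 * width n else 3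

def windowStart (n l : ℕ) : ℕ := blockStart n + l * width n

def window (n l : ℕ) : Finset ℕ := Finset.Ico (windowStart n l) (windowStart n l + width n)

lemma two_rpow_le_two_pow_width (n : ℕ) : (2 : ℝ) ^ ((n : ℝ) / 8 - 2) ≤ 2 ^ width n := by
  rw [← Real.rpow_natCast]
  refine Real.rpow_le_rpow_of_exponent_le one_le_two ?_
  have h : n ≤ 8 * width n + 16 := by unfold width; omega
  have h' : (n : ℝ) ≤ 8 * width n + 16 := by exact_mod_cast h
  linarith

variable {n l r i : ℕ}

lemma window_subset_block (hl : l < 4) :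
    blockStart n ≤ windowStart n l ∧ windowStart n l + width n ≤ blockStart n + 4 * width n := by
  have : l * width n + width n ≤ 4 * width n := by nlinarith
  unfold windowStart
  omega

lemma three_le_of_mem_window (hl : l < 4) (hi : i ∈ window n l) : 3 ≤ i := by
  have := window_subset_block (n := n) hl
  rw [window, Finset.mem_Ico] at hi
  unfold blockStart width at *
  split_ifs at * <;> omega

lemma windowStart_add_width_le (hn : 2 ≤ n) (hl : l < 4) : windowStart n l + width n ≤ n := by
  have := window_subset_block (n := n) hl
  unfold blockStart width at *
  split_ifs at * <;> omega

lemma two_le_windowStart (hn : 2 ≤ n) : 2 ≤ windowStart n l := by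
  unfold windowStart blockStart width
  split_ifs <;> omega

lemma notMem_window_of_ne (hrl : r ≠ l) (hi : i ∈ window n r) : i ∉ window n l := by
  simp only [window, windowStart, Finset.mem_Ico] at hi ⊢
  rcases Nat.lt_or_gt_of_ne hrl with h | h
  · have : (r + 1) * width n ≤ l * width n := Nat.mul_le_mul_right _ h
    rw [add_mul, one_mul] at this
    omega
  · have : (l + 1) * width n ≤ r * width n := Nat.mul_le_mul_right _ h
    rw [add_mul, one_mul] at this
    omega

lemma succ_notMem_window_succ (hl : l < 4) (hr : r < 4) (hi : i ∈ window n r) :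
    i + 1 ∉ window (n + 1) l := by
  intro hi'
  have h := window_subset_block (n := n) hr
  have h' := window_subset_block (n := n + 1) hl
  rw [window, Finset.mem_Ico] at hi hi'
  unfold blockStart width at *
  split_ifs at * <;> omega

lemma add_two_sub_fExp_notMem_window {k : ℕ} (hn : 2 ≤ n) (hl : l < 4) (hr : r < 4)
    (hrl : fExp k = 2 → r ≠ l) (hi : i ∈ window (n + fExp k - 2) r) :
    fExp k ≤ i ∧ i + 2 - fExp k ∉ window n l := by
  have h3 := three_le_of_mem_window hr hi
  unfold fExp at hrl hi ⊢
  split_ifs at hrl hi ⊢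
  · obtain ⟨m, rfl⟩ : ∃ m, n = m + 1 := ⟨n - 1, by omega⟩
    exact ⟨by omega, succ_notMem_window_succ hl hr (by simpa using hi)⟩
  · exact ⟨by omega, by simpa using notMem_window_of_ne (hrl rfl) hi⟩
  · refine ⟨h3, fun hi' => succ_notMem_window_succ hr hl hi' ?_⟩
    rw [show i + 2 - 3 + 1 = i by omega]
    simpa using hi

end Layout

section Keys

def deltaKey (n j : ℕ) : ℕ × ℕ := (j % 4, field (windowStart n (j % 4)) (width n) j)

def nablaKey (n j : ℕ) : ℕ × ℕ × ℕ :=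
  (j % 4, j % 2 ^ windowStart n (j % 4), j / 2 ^ (windowStart n (j % 4) + width n))

variable {n x y : ℕ}

lemma nablaKey_eq_iff : nablaKey n x = nablaKey n y ↔ x % 4 = y % 4 ∧
    x % 2 ^ windowStart n (y % 4) = y % 2 ^ windowStart n (y % 4) ∧
    x / 2 ^ (windowStart n (y % 4) + width n) = y / 2 ^ (windowStart n (y % 4) + width n) := by
  simp only [nablaKey, Prod.mk.injEq]
  constructor <;> rintro ⟨hl, h⟩ <;> exact ⟨hl, hl ▸ h⟩

lemma testBit_eq_of_nablaKey_eq (h : nablaKey n x = nablaKey n y) {i : ℕ}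
    (hi : i ∉ window n (y % 4)) : x.testBit i = y.testBit i := by
  obtain ⟨-, hmod, hdiv⟩ := nablaKey_eq_iff.1 h
  refine testBit_eq_of_mod_eq_of_div_eq hmod hdiv ?_
  rw [window, Finset.mem_Ico] at hi
  omega

lemma eq_of_nablaKey_eq_of_deltaKey_eq (hN : nablaKey n x = nablaKey n y)
    (hD : deltaKey n x = deltaKey n y) : x = y := by
  obtain ⟨hl, hmod, hdiv⟩ := nablaKey_eq_iff.1 hN
  simp only [deltaKey, Prod.mk.injEq, hl] at hD
  rw [← setField_field _ _ x, ← setField_field _ _ y, hD.2, setField_congr hmod hdiv]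

lemma card_of_mem_fibres_nablaKey (hn : 2 ≤ n) {A : Finset ℕ}
    (hA : A ∈ fibres (sigmaF n) (nablaKey n)) : A.card = 2 ^ width n := by
  obtain ⟨a, ha, rfl⟩ := Finset.mem_image.1 hA
  set q := windowStart n (a % 4)
  have hl : a % 4 < 4 := Nat.mod_lt _ (by norm_num)
  have hmod4 {w : ℕ} : setField q (width n) a w % 4 = a % 4 := by
    have h4 : 4 ∣ 2 ^ q := Nat.pow_dvd_pow (m := 2) 2 (two_le_windowStart hn)
    rw [← Nat.mod_mod_of_dvd _ h4, setField_mod_two_pow, Nat.mod_mod_of_dvd _ h4]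
  rw [← Finset.card_range (2 ^ width n)]
  refine Finset.card_nbij' (field q (width n)) (setField q (width n) a) ?_ ?_ ?_ ?_
  · exact fun x _ => Finset.mem_range.2 (Nat.mod_lt _ (by positivity))
  · intro w hw
    have hw : w < 2 ^ width n := Finset.mem_range.1 hw
    exact Finset.mem_filter.2 ⟨mem_sigmaF_of_div_eq (windowStart_add_width_le hn hl)
      (setField_div_two_pow_add hw) ha,
      nablaKey_eq_iff.2 ⟨hmod4, setField_mod_two_pow w, setField_div_two_pow_add hw⟩⟩
  · intro x hx
    obtain ⟨-, hmod, hdiv⟩ := nablaKey_eq_iff.1 (Finset.mem_filter.1 hx).2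
    rw [← setField_congr hmod hdiv, setField_field]
  · intro w hw
    exact field_setField (Finset.mem_range.1 hw)

lemma deltaKey_f_eq {k : ℕ} (hn : 2 ≤ n) (hk : 1 ≤ k) (h : nablaKey n x = nablaKey n y) :
    deltaKey (n + fExp k - 2) (f k x) = deltaKey (n + fExp k - 2) (f k y) := by
  have hl : y % 4 < 4 := Nat.mod_lt _ (by norm_num)
  have h8 : x % 8 = y % 8 := mod_two_pow_eq_of_testBit_eq (q := 3) fun i hi =>
    testBit_eq_of_nablaKey_eq h fun hw => by have := three_le_of_mem_window hl hw; omega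
  have hr : f k x % 4 = f k y % 4 := by rw [f_mod_four_eq, h8, ← f_mod_four_eq]
  simp only [deltaKey, hr, Prod.mk.injEq, true_and]
  refine field_congr fun i hi => ?_
  have hxy : x % 4 = y % 4 := (nablaKey_eq_iff.1 h).1
  obtain ⟨hei, hout⟩ := add_two_sub_fExp_notMem_window hn hl (Nat.mod_lt _ (by norm_num))
    (fun he => hxy ▸ hr ▸ f_mod_four_ne he x) hi
  rw [testBit_f hk x hei, testBit_f hk y hei, testBit_eq_of_nablaKey_eq h hout]

end Keys

end Szankowski

open Szankowski in
/-- Szankowski's combinatorial lemma: there are partitions Δ_n, ∇_n of σ_n and numbers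
m_n ≥ 2^{n/8-2} (n ≥ 2) with: (1) m_n ≤ card A ≤ 2m_n for A ∈ ∇_n;
(2) card(A ∩ B) ≤ 1 for A ∈ ∇_n, B ∈ Δ_n; (3) each f_k(A), 1 ≤ k ≤ 9, is contained
in a single element of Δ_{n-1}, Δ_n, or Δ_{n+1}. -/
theorem szankowski_lemma :
    ∃ (Δ : ℕ → Finset (Finset ℕ)) (nab : ℕ → Finset (Finset ℕ)) (m : ℕ → ℝ),
      (∀ n, 1 ≤ n → IsPartitionOf (Δ n) (sigmaF n)) ∧
      (∀ n, 2 ≤ n →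
        IsPartitionOf (nab n) (sigmaF n) ∧
        (2 : ℝ) ^ ((n : ℝ) / 8 - 2) ≤ m n ∧
        (∀ A ∈ nab n, m n ≤ (A.card : ℝ) ∧ (A.card : ℝ) ≤ 2 * m n) ∧
        (∀ A ∈ nab n, ∀ B ∈ Δ n, (A ∩ B).card ≤ 1) ∧
        (∀ A ∈ nab n, ∀ k, 1 ≤ k → k ≤ 9 →
          ∃ B, (B ∈ Δ (n - 1) ∨ B ∈ Δ n ∨ B ∈ Δ (n + 1)) ∧ A.image (f k) ⊆ B)) := by
  refine ⟨fun n => fibres (sigmaF n) (deltaKey n), fun n => fibres (sigmaF n) (nablaKey n),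
    fun n => 2 ^ width n, fun n _ => isPartitionOf_fibres _ _, fun n hn =>
    ⟨isPartitionOf_fibres _ _, two_rpow_le_two_pow_width n, fun A hA => ?_, fun A hA B hB => ?_,
      fun A hA k hk _ => ?_⟩⟩
  · rw [card_of_mem_fibres_nablaKey hn hA]
    push_cast
    exact ⟨le_rfl, by linarith [(by positivity : (0 : ℝ) < 2 ^ width n)]⟩
  · exact card_inter_le_one_of_mem_fibres
      (fun x _ y _ => eq_of_nablaKey_eq_of_deltaKey_eq) hA hB
  · obtain ⟨B, hB, hAB⟩ := exists_image_subset_of_mem_fibres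
      (fun j hj => f_mem_sigmaF hn hk hj) (fun x _ y _ hxy => deltaKey_f_eq hn hk hxy) hA
    have hlevel : n + fExp k - 2 = n - 1 ∨ n + fExp k - 2 = n ∨ n + fExp k - 2 = n + 1 := by
      unfold fExp; split_ifs <;> omega
    refine ⟨B, ?_, hAB⟩
    rcases hlevel with h | h | h <;> rw [h] at hB <;> simp [hB]
end

section
/- For each n ≥ 2 and each j ∈ σ_{n+1}, the vector y_j = 2^{n+1}(β_n - β_{n-1})(e_j) ∈ ℓ²(ℕ) is a linear combination Σ_{k=1}^9 λ_{j,k} e_{f_k(j)} of the nine basis vectors e_{f_1(j)}, ..., e_{f_9(j)}, where exactly eight of the coefficients λ_{j,k} have absolute value 1 and one has absolute value 2; consequently ‖y_j‖² = 12. -/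
/-- The basis vectors e_m, as finitely supported functions ℕ → ℂ. -/
noncomputable def e (m : ℕ) : ℕ → ℂ := Pi.single m 1

/-- z_i = e_{2i} - e_{2i+1} + e_{4i} + e_{4i+1} + e_{4i+2} + e_{4i+3}. -/
noncomputable def z (i : ℕ) : ℕ → ℂ :=
  e (2 * i) - e (2 * i + 1) + e (4 * i) + e (4 * i + 1) + e (4 * i + 2) + e (4 * i + 3)

/-- y_j = 2^{n+1}(β_n - β_{n-1})(e_j), where β_n = (1/2^n) Σ_{i∈σ_n} z_i* ⊗ z_i with
z_i* = (1/2)(e_{2i}* - e_{2i+1}*), and in β_{n-1} the functional z_i* is represented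
as (1/4)(e_{4i}* + e_{4i+1}* + e_{4i+2}* + e_{4i+3}*). -/
noncomputable def y (n j : ℕ) : ℕ → ℂ :=
  (2 : ℂ) ^ (n + 1) •
    ((1 / (2 : ℂ) ^ n) • ∑ i ∈ Finset.Ico (2 ^ n) (2 ^ (n + 1)),
        ((1 / 2 : ℂ) * ((if j = 2 * i then 1 else 0) - (if j = 2 * i + 1 then 1 else 0)))
          • z i
      - (1 / (2 : ℂ) ^ (n - 1)) • ∑ i ∈ Finset.Ico (2 ^ (n - 1)) (2 ^ n),
        ((1 / 4 : ℂ) * ((if j = 4 * i then 1 else 0) + (if j = 4 * i + 1 then 1 else 0)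
          + (if j = 4 * i + 2 then 1 else 0) + (if j = 4 * i + 3 then 1 else 0))) • z i)

/-! For `j ∈ σ_{n+1}` only one functional of `β_n` and one of `β_{n-1}` see `e_j`, so that
`y_j = (-1)^j z_{⌊j/2⌋} - z_{⌊j/4⌋}`. Writing `j = 4i + r`, the two vectors overlap exactly on
the pair `e_{4i+2⌊r/2⌋}, e_{4i+2⌊r/2⌋+1}`, which contains `e_j`: there `e_j` cancels and its
partner gets coefficient `-2`. The other eight basis vectors carry `±1`, and the nine indices are
distinct as soon as `i ≥ 1`, so `‖y_j‖² = 4 + 8 = 12`. -/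

open Finset

lemma e_apply (m x : ℕ) : e m x = if x = m then 1 else 0 := by
  simp [e, Pi.single_apply]

section SumOfSquares

variable {ι : Type*} [Fintype ι] (lam : ι → ℂ) {g : ι → ℕ}

lemma sum_smul_e_apply_of_injective (hg : Function.Injective g) (k : ι) :
    (∑ k', lam k' • e (g k')) (g k) = lam k := by
  rw [Finset.sum_apply, sum_eq_single_of_mem k (mem_univ k) fun k' _ hk' => ?_]
  · simp [e]
  · simp [e_apply, hg.ne hk'.symm]

lemma sum_smul_e_apply_of_notMem_range {x : ℕ} (hx : x ∉ Set.range g) :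
    (∑ k, lam k • e (g k)) x = 0 := by
  refine (Finset.sum_apply x _ _).trans (sum_eq_zero fun k _ => ?_)
  simp only [Pi.smul_apply, e_apply, smul_eq_mul, mul_ite, mul_one, mul_zero]
  exact if_neg fun h => hx ⟨k, h.symm⟩

lemma sum_range_norm_sq_sum_smul_e (hg : Function.Injective g) {N : ℕ} (hN : ∀ k, g k < N) :
    ∑ x ∈ range N, ‖(∑ k, lam k • e (g k)) x‖ ^ 2 = ∑ k, ‖lam k‖ ^ 2 := by
  have hsub : univ.image g ⊆ range N := by
    simpa [image_subset_iff] using hN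
  rw [← sum_subset hsub, sum_image fun k _ k' _ h => hg h]
  · simp [sum_smul_e_apply_of_injective lam hg]
  · intro x _ hx
    rw [sum_smul_e_apply_of_notMem_range lam (by simpa using hx), norm_zero,
      zero_pow two_ne_zero]

end SumOfSquares

lemma sum_norm_sq_of_norm_eq_two_of_norm_eq_one {ι E : Type*} [Fintype ι] [DecidableEq ι]
    [SeminormedAddCommGroup E] (lam : ι → E) (k₀ : ι) (h₀ : ‖lam k₀‖ = 2)
    (h₁ : ∀ k, k ≠ k₀ → ‖lam k‖ = 1) :
    ∑ k, ‖lam k‖ ^ 2 = 4 + ((Fintype.card ι : ℝ) - 1) := by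
  rw [Fintype.sum_eq_add_sum_compl k₀, h₀, sum_congr rfl fun k hk => by
    rw [h₁ k (by simpa using hk), one_pow]]
  simp [card_compl, Nat.cast_sub (Fintype.card_pos_iff.2 ⟨k₀⟩)]
  norm_num

lemma zStar_coeff (j i : ℕ) :
    ((if j = 2 * i then 1 else 0) - (if j = 2 * i + 1 then 1 else 0) : ℂ) =
      if i = j / 2 then (-1) ^ j else 0 := by
  obtain ⟨a, rfl | rfl⟩ := Nat.even_or_odd' j <;> split_ifs <;>
    first | omega | simp [pow_succ, pow_mul]

lemma zStar_block_coeff (j i : ℕ) :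
    ((if j = 4 * i then 1 else 0) + (if j = 4 * i + 1 then 1 else 0)
      + (if j = 4 * i + 2 then 1 else 0) + (if j = 4 * i + 3 then 1 else 0) : ℂ) =
      if i = j / 4 then 1 else 0 := by
  split_ifs <;> first | omega | norm_num

lemma y_eq_neg_one_pow_smul_sub {n j : ℕ} (hn : 1 ≤ n)
    (hj : j ∈ Ico (2 ^ (n + 1)) (2 ^ (n + 2))) :
    y n j = (-1 : ℂ) ^ j • z (j / 2) - z (j / 4) := by
  obtain ⟨m, rfl⟩ : ∃ m, n = m + 1 := ⟨n - 1, by omega⟩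
  have h2 : j / 2 ∈ Ico (2 ^ (m + 1)) (2 ^ (m + 1 + 1)) := by
    simp only [mem_Ico, pow_succ] at hj ⊢; omega
  have h4 : j / 4 ∈ Ico (2 ^ m) (2 ^ (m + 1)) := by
    simp only [mem_Ico, pow_succ] at hj ⊢; omega
  simp only [y, zStar_coeff, zStar_block_coeff, mul_ite, mul_zero, ite_smul, zero_smul,
    sum_ite_eq', h2, h4, if_true, Nat.add_sub_cancel]
  match_scalars <;> field_simp <;> ring

lemma z_two_mul_add (i b : ℕ) :
    z (2 * i + b) = e (4 * i + 2 * b) - e (4 * i + 2 * b + 1) + e (8 * i + 4 * b)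
      + e (8 * i + 4 * b + 1) + e (8 * i + 4 * b + 2) + e (8 * i + 4 * b + 3) := by
  simp only [z, mul_add, ← mul_assoc]; norm_num

/-- The coefficients `λ_{j,k}` of `y_j`, which depend only on `r = j % 4`. -/
def yCoeff (r : ℕ) : Fin 9 → ℂ :=
  ![-1, 1, if Even r then -2 else -1, -1, if Even r then -1 else -2,
    (-1) ^ r, (-1) ^ r, (-1) ^ r, (-1) ^ r]

lemma y_eq_sum {n j : ℕ} (hn : 1 ≤ n) (hj : j ∈ Ico (2 ^ (n + 1)) (2 ^ (n + 2))) :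
    y n j = ∑ k : Fin 9, yCoeff (j % 4) k • e (f (k.val + 1) j) := by
  rw [y_eq_neg_one_pow_smul_sub hn hj]
  obtain ⟨i, r, hr, rfl⟩ : ∃ i r, r < 4 ∧ j = 4 * i + r := ⟨j / 4, j % 4, by omega, by omega⟩
  have hdiv2 : (4 * i + r) / 2 = 2 * i + r / 2 := by omega
  have hdiv4 : (4 * i + r) / 4 = i := by omega
  have hmod4 : (4 * i + r) % 4 = r := by omega
  have hsign : (-1 : ℂ) ^ (4 * i + r) = (-1) ^ r := by norm_num [pow_add, pow_mul]
  simp only [hsign, hdiv2, hdiv4, hmod4, z_two_mul_add, f, Fin.sum_univ_succ, Fin.sum_univ_zero]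
  interval_cases r <;> simp [yCoeff, z, add_assoc, Nat.even_iff] <;> module

lemma exists_norm_yCoeff_eq_two (r : ℕ) :
    ∃ k₀, ‖yCoeff r k₀‖ = 2 ∧ ∀ k, k ≠ k₀ → ‖yCoeff r k‖ = 1 := by
  rcases Nat.even_or_odd r with hr | hr
  · refine ⟨2, by simp [yCoeff, hr], fun k hk => ?_⟩
    fin_cases k <;> simp [yCoeff, hr] at hk ⊢
  · have hr' : ¬Even r := Nat.not_even_iff_odd.2 hr
    refine ⟨4, by simp [yCoeff, hr'], fun k hk => ?_⟩
    fin_cases k <;> simp [yCoeff, hr'] at hk ⊢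

lemma f_lt (j : ℕ) (k : Fin 9) : f (k.val + 1) j < 8 * (j / 4) + 8 := by
  have hr : j % 4 < 4 := Nat.mod_lt _ (by norm_num)
  fin_cases k <;> simp only [f] <;> (try split_ifs) <;> omega

lemma f_injective {j : ℕ} (hj : 4 ≤ j) : Function.Injective fun k : Fin 9 => f (k.val + 1) j := by
  have hr : j % 4 < 4 := Nat.mod_lt _ (by norm_num)
  intro k k' h
  fin_cases k <;> fin_cases k' <;> simp only [f] at h <;> (try split_ifs at h) <;>
    first | rfl | omega

/-- For n ≥ 2 and j ∈ σ_{n+1}, y_j = Σ_{k=1}^9 λ_{j,k} e_{f_k(j)} where exactly eight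
coefficients have absolute value 1, one has absolute value 2, and ‖y_j‖² = 12. -/
theorem y_structure (n : ℕ) (hn : 2 ≤ n) (j : ℕ)
    (hj : j ∈ Finset.Ico (2 ^ (n + 1)) (2 ^ (n + 2))) :
    ∃ lam : Fin 9 → ℂ,
      y n j = ∑ k : Fin 9, lam k • e (f (k.val + 1) j) ∧
      (∃ k0 : Fin 9, ‖lam k0‖ = 2 ∧
        ∀ k : Fin 9, k ≠ k0 → ‖lam k‖ = 1) ∧
      ∑ m ∈ Finset.range (2 ^ (n + 3)), ‖y n j m‖ ^ 2 = 12 := by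
  have hy := y_eq_sum (by omega) hj
  obtain ⟨k₀, h₀, h₁⟩ := exists_norm_yCoeff_eq_two (j % 4)
  refine ⟨yCoeff (j % 4), hy, ⟨k₀, h₀, h₁⟩, ?_⟩
  rw [mem_Ico] at hj
  have hj4 : 4 ≤ j := (Nat.pow_le_pow_right two_pos (by omega : 2 ≤ n + 1)).trans hj.1
  have hf_lt (k : Fin 9) : f (k.val + 1) j < 2 ^ (n + 3) := by
    have h4 : 2 ^ (n + 2) = 4 * 2 ^ n := by ring
    have h8 : 2 ^ (n + 3) = 8 * 2 ^ n := by ring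
    have := f_lt j k
    omega
  rw [hy, sum_range_norm_sq_sum_smul_e _ (f_injective hj4) hf_lt,
    sum_norm_sq_of_norm_eq_two_of_norm_eq_one _ k₀ h₀ h₁]
  norm_num
end
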